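/- arXiv:1611.08419 — 2 statements merged into one kernel-verified Lean document; each statement's English description precedes it below -/
import Mathlib

section
/- Fix an Alice strategy, let B be a random infinite cycle, and suppose that at time n+1 Alice plays a c-move (i.e. ν_A(n+1) is a common edge of A_n and B_n). Then, conditioned on B_n (on Bob's choices up to time n): P(S_{n+1}=S_n−2 and T_{n+1}=T_n+1) = S*_n/n; P(S_{n+1}=S_n−1 and T_{n+1}=T_n+1) ≤ 2/n; P(S_{n+1}=S_n−1 and T_{n+1}=T_n) = R_n/n; P(S_{n+1}=S_n and T_{n+1}=T_n) ≤ 2/n; P(S_{n+1}=S_n+1 and T_{n+1}=T_n) = 1/n; and all other pairs of increments (ΔS, ΔT) with ΔS ∈ {−2,−1,0,+1}, ΔT ∈ {−1,0,+1} have conditional probability 0. -/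
open MeasureTheory

/-- An infinite cycle: coordinate `i` represents the choice `c_{i+3} ∈ {1,…,i+3}`
(encoded as `Fin (i+3)`, with value `v` representing `v+1`). -/
abbrev InfCycle := ∀ i : ℕ, Fin (i + 3)

/-- The list of nodes of the cycle `A_n`, in positive direction starting at node 1.
`A_{n+1}` arises from `A_n` by inserting node `n+1` into the `c_n`-th edge. -/
def listOf (c : InfCycle) : ℕ → List ℕ
  | 0 => []
  | 1 => []
  | 2 => []
  | 3 => [1, 2, 3]
  | (n + 4) => (listOf c (n + 3)).insertIdx ((c n).val + 1) (n + 4)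

/-- The node following `x` in the cyclic order given by the list `l`. -/
def cyclicNext (l : List ℕ) (x : ℕ) : ℕ := (l.rotate 1).getD (l.idxOf x) 0

/-- The node preceding `x` in the cyclic order given by the list `l`. -/
def cyclicPrev (l : List ℕ) (x : ℕ) : ℕ := (l.rotate (l.length - 1)).getD (l.idxOf x) 0

/-- `ν⁺_A(k)`: the neighbor of `k` in `A_k` in positive direction. -/
def nuPlus (c : InfCycle) (k : ℕ) : ℕ :=
  if k ≤ 1 then 0 else if k = 2 then 1 else cyclicNext (listOf c k) k

/-- `ν⁻_A(k)`: the neighbor of `k` in `A_k` in negative direction. -/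
def nuMinus (c : InfCycle) (k : ℕ) : ℕ :=
  if k ≤ 1 then 0 else if k = 2 then 1 else cyclicPrev (listOf c k) k

/-- `ν_A(k) = {ν⁺_A(k), ν⁻_A(k)}`, the edge of `A_{k-1}` into which `k` was inserted. -/
def nuSet (c : InfCycle) (k : ℕ) : Finset ℕ := {nuPlus c k, nuMinus c k}

/-- The edges (as unordered pairs) of the cycle whose nodes, in cyclic order, are `l`. -/
def edgeList (l : List ℕ) : List (Finset ℕ) :=
  l.zipWith (fun x y => ({x, y} : Finset ℕ)) (l.rotate 1)

/-- `E(A_n)`: the edge set of the cycle `A_n`. -/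
def cycleEdges (c : InfCycle) (n : ℕ) : Finset (Finset ℕ) := (edgeList (listOf c n)).toFinset

/-- `k` is a vertex of the pedigree graph `G_n^{AB}`. -/
def isVertex (a b : InfCycle) (n k : ℕ) : Prop := 4 ≤ k ∧ k ≤ n ∧ nuSet a k ≠ nuSet b k

/-- The condition for an edge of the pedigree graph between vertices `k < m`
(type-1 A→B, type-1 B→A, type-2 A→B, type-2 B→A). -/
def edgeCond (a b : InfCycle) (k m : ℕ) : Prop :=
  nuSet a m = nuSet b k ∨ nuSet b m = nuSet a k ∨
  (k = max (nuPlus a m) (nuMinus a m) ∧ nuSet b k ∩ nuSet a m = ∅) ∨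
  (k = max (nuPlus b m) (nuMinus b m) ∧ nuSet a k ∩ nuSet b m = ∅)

/-- The pedigree graph `G_n^{AB}`, as a graph on `ℕ` (non-vertices are isolated). -/
def pedigreeGraph (a b : InfCycle) (n : ℕ) : SimpleGraph ℕ where
  Adj k m := isVertex a b n k ∧ isVertex a b n m ∧
    ((k < m ∧ edgeCond a b k m) ∨ (m < k ∧ edgeCond a b m k))
  symm := ⟨fun k m ⟨h1, h2, h3⟩ => ⟨h2, h1, h3.symm⟩⟩
  loopless := ⟨fun k h => by rcases h.2.2 with ⟨h', _⟩ | ⟨h', _⟩ <;> exact absurd h' (lt_irrefl k)⟩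

/-- The vertex set of the pedigree graph `G_n^{AB}`. -/
def vertexSet (a b : InfCycle) (n : ℕ) : Set ℕ := {k | isVertex a b n k}

/-- The pedigree graph `G_n^{AB}` on its vertex set. -/
def pGraph (a b : InfCycle) (n : ℕ) : SimpleGraph (vertexSet a b n) :=
  (pedigreeGraph a b n).induce (vertexSet a b n)

/-- The pedigree graph `G_n^{AB}` is connected. -/
def pConnected (a b : InfCycle) (n : ℕ) : Prop := (pGraph a b n).Connected

/-- `T_n`: the number of connected components of the pedigree graph `G_n^{AB}`. -/
noncomputable def Tnum (a b : InfCycle) (n : ℕ) : ℕ :=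
  Nat.card (pGraph a b n).ConnectedComponent

/-- `I_n`: at time `n`, the node `n` is added to the pedigree graph as an isolated vertex. -/
def isolatedAt (a b : InfCycle) (n : ℕ) : Prop :=
  isVertex a b n n ∧ ∀ k, ¬ (pedigreeGraph a b n).Adj n k

/-- The event that the first `m` coordinates (`c_3, …, c_{m+2}`) agree with those of `b₀`. -/
def prefixEvent (b₀ : InfCycle) (m : ℕ) : Set InfCycle := {b | ∀ j, j < m → b j = b₀ j}

/-- `μ` is the distribution of a random infinite cycle: the product over `n ≥ 3` of the
uniform measures on `{1,…,n}`.  (This property determines `μ` uniquely.) -/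
def IsCycleMeasure (μ : Measure InfCycle) : Prop :=
  IsProbabilityMeasure μ ∧
    ∀ (b₀ : InfCycle) (m : ℕ),
      μ (prefixEvent b₀ m) = ∏ j ∈ Finset.range m, ((j + 3 : ℕ) : ENNReal)⁻¹

/-- An Alice strategy: her choice at each time depends only on Bob's earlier choices. -/
structure AliceStrategy where
  play : InfCycle → InfCycle
  adapted : ∀ (b b' : InfCycle) (i : ℕ), (∀ j, j < i → b j = b' j) → play b i = play b' i

/-- `S_n = |E(A_n) ∩ E(B_n)|`. -/
def Sval (a b : InfCycle) (n : ℕ) : ℕ := (cycleEdges a n ∩ cycleEdges b n).card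

/-- `S*_n`: the number of common edges not incident on `ν_A(n+1)`. -/
def Sstar (a b : InfCycle) (n : ℕ) : ℕ :=
  ((cycleEdges a n ∩ cycleEdges b n).filter (fun e => e ∩ nuSet a (n + 1) = ∅)).card

/-- `R_n`: the number of edges of `B_n` that are not common and not incident on `ν_A(n+1)`. -/
def Rval (a b : InfCycle) (n : ℕ) : ℕ :=
  ((cycleEdges b n \ cycleEdges a n).filter (fun e => e ∩ nuSet a (n + 1) = ∅)).card

/-- Alice's move at time `m` is a d-move: `ν_A(m) ∉ E^∩_{m-1}`. -/
def dMoveAt (a b : InfCycle) (m : ℕ) : Prop := nuSet a m ∉ cycleEdges b (m - 1)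

/-- `Y`: the total number of times an isolated vertex is created in the pedigree graph. -/
noncomputable def Yval (a b : InfCycle) : ENNReal :=
  ∑' m : ℕ, Set.indicator {x : ℕ | isolatedAt a b x} (fun _ => 1) m

/-- The conditional probability, given Bob's choices up to time `n` (i.e. given `B_n`,
determined by the prefix `b₀` of length `n - 3`), that `S_{n+1} = S_n + ds` and
`T_{n+1} = T_n + dt`. -/
noncomputable def condP (μ : Measure InfCycle) (σ : AliceStrategy) (b₀ : InfCycle)
    (n : ℕ) (ds dt : ℤ) : ENNReal :=
  ProbabilityTheory.cond μ (prefixEvent b₀ (n - 3))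
    {b : InfCycle |
      (Sval (σ.play b) b (n + 1) : ℤ) = (Sval (σ.play b₀) b₀ n : ℤ) + ds ∧
      (Tnum (σ.play b) b (n + 1) : ℤ) = (Tnum (σ.play b₀) b₀ n : ℤ) + dt}

/-!
Condition on Bob's first `n - 3` choices. Alice's edge `f = ν_A(n+1)` is then fixed (her strategy
only sees Bob's earlier choices), and Bob's next choice selects an edge `e` of `B_n` uniformly,
because choices correspond bijectively to edges. The increments of `S` and `T` depend on `e` only:
`S` changes by `|e ∩ f| - 1 - [e ≠ f, e ∈ E(A_n)]`, and the new pedigree vertex `n + 1` (present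
iff `e ≠ f`) is isolated if `e ∈ E(A_n)` and has exactly one neighbour otherwise. Both facts rest
on two properties of growing cycles: an edge, once subdivided, never reappears, and an edge
`{w, x}` with `w < x` can only have been created by inserting `x` into an edge containing `w`.
Counting the edges of each kind gives the result: common edges disjoint from `f` give `S*_n`,
edges of `B_n` not in `A_n` and disjoint from `f` give `R_n`, `e = f` happens once, and at most
two edges other than `f` meet `f`.
-/

namespace List

theorem insertIdx_eq_take_append_drop {α : Type*} (x : α) :
    ∀ (l : List α) (i : ℕ), i ≤ l.length → l.insertIdx i x = l.take i ++ x :: l.drop i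
  | _, 0, _ => by simp
  | a :: l, i + 1, hi => by
    simp [insertIdx_succ_cons, insertIdx_eq_take_append_drop x l i (by simpa using hi)]

theorem insertIdx_rotate {α : Type*} (l : List α) (x : α) {i : ℕ} (hi : i ≤ l.length) :
    (l.insertIdx i x).rotate i = x :: l.rotate i := by
  have h := rotate_append_length_eq (l.take i) (x :: l.drop i)
  rw [length_take_of_le hi] at h
  rw [insertIdx_eq_take_append_drop x l i hi, h, rotate_eq_drop_append_take hi, cons_append]

theorem idxOf_insertIdx_self {α : Type*} [DecidableEq α] {l : List α} {m : α} (hm : m ∉ l) :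
    ∀ {i : ℕ}, i ≤ l.length → (l.insertIdx i m).idxOf m = i := by
  induction l with
  | nil => intro i hi; simp_all
  | cons x t ih =>
    rintro (_ | i) hi
    · simp
    · rw [insertIdx_succ_cons, idxOf_cons_ne _ (by simp at hm; tauto),
        ih (by simp at hm; tauto) (by simpa using hi)]

end List

theorem Nat.add_mod_eq_or {j d L : ℕ} (hj : j < L) (hd : d ≤ L) :
    j + d < L ∧ (j + d) % L = j + d ∨ L ≤ j + d ∧ (j + d) % L = j + d - L := by
  rcases Nat.lt_or_ge (j + d) L with h | h
  · exact Or.inl ⟨h, Nat.mod_eq_of_lt h⟩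
  · exact Or.inr ⟨h, by rw [Nat.mod_eq_sub_mod h, Nat.mod_eq_of_lt (by omega)]⟩

theorem Finset.pair_eq_pair_iff {α : Type*} [DecidableEq α] {x y z w : α} :
    ({x, y} : Finset α) = {z, w} ↔ x = z ∧ y = w ∨ x = w ∧ y = z := by
  rw [← Finset.coe_inj, Finset.coe_pair, Finset.coe_pair, Set.pair_eq_pair_iff]

theorem Finset.card_inter_eq_one_of_card_eq_two {α : Type*} [DecidableEq α] {s t : Finset α}
    (hs : s.card = 2) (ht : t.card = 2) (hne : s ≠ t) (hmeet : s ∩ t ≠ ∅) : (s ∩ t).card = 1 := by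
  have hle : (s ∩ t).card ≤ 2 := hs ▸ Finset.card_le_card Finset.inter_subset_left
  have hpos : 0 < (s ∩ t).card := Finset.card_pos.2 (Finset.nonempty_iff_ne_empty.2 hmeet)
  by_contra h
  have hs' : s ∩ t = s := Finset.eq_of_subset_of_card_le Finset.inter_subset_left (by omega)
  have ht' : s ∩ t = t := Finset.eq_of_subset_of_card_le Finset.inter_subset_right (by omega)
  exact hne (hs'.symm.trans ht')

theorem Finset.card_erase_inter_erase_add_one {α : Type*} [DecidableEq α] {A B : Finset α}
    {f e : α} (hf : f ∈ A ∩ B) (he : e ∈ B) :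
    ((A.erase f) ∩ (B.erase e)).card + 1 + (if e ≠ f ∧ e ∈ A then 1 else 0) = (A ∩ B).card := by
  have herase : A.erase f ∩ B.erase e = ((A ∩ B).erase f).erase e := by
    ext g
    simp only [Finset.mem_inter, Finset.mem_erase]
    tauto
  rw [herase, ← Finset.card_erase_add_one hf]
  split_ifs with h
  · rw [← Finset.card_erase_add_one (Finset.mem_erase.2 ⟨h.1, Finset.mem_inter.2 ⟨h.2, he⟩⟩)]
  · rw [Finset.erase_eq_of_notMem fun h' => h ⟨(Finset.mem_erase.1 h').1,
      (Finset.mem_inter.1 (Finset.mem_erase.1 h').2).1⟩]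

namespace SimpleGraph

variable {V : Type*} {G : SimpleGraph V}

theorem Reachable.eq_of_forall_adj {β : Sort*} {f : V → β} (hf : ∀ v w, G.Adj v w → f v = f w)
    {u v : V} (h : G.Reachable u v) : f u = f v := by
  obtain ⟨p⟩ := h
  induction p with
  | nil => rfl
  | cons h _ ih => exact (hf _ _ h).trans ih

variable {s : Set V} {a : V}

theorem card_connectedComponent_induce_insert_of_forall_not_adj (ha : a ∉ s) (hs : s.Finite)
    (hiso : ∀ b ∈ s, ¬ G.Adj a b) :
    Nat.card (G.induce (insert a s)).ConnectedComponent =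
      Nat.card (G.induce s).ConnectedComponent + 1 := by
  classical
  have hmem (v : ↥(insert a s)) (hv : (v : V) ≠ a) : (v : V) ∈ s :=
    Set.mem_of_mem_insert_of_ne v.2 hv
  let F : ↥(insert a s) → Option (G.induce s).ConnectedComponent := fun v =>
    if h : (v : V) = a then none else some (connectedComponentMk _ ⟨v, hmem v h⟩)
  have hF : ∀ v w, (G.induce (insert a s)).Adj v w → F v = F w := by
    rintro v w (hvw : G.Adj v w)
    by_cases hv : (v : V) = a <;> by_cases hw : (w : V) = a
    · exact absurd (hv.trans hw.symm) hvw.ne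
    · rw [hv] at hvw; exact absurd hvw (hiso _ (hmem w hw))
    · rw [hw] at hvw; exact absurd hvw.symm (hiso _ (hmem v hv))
    · simp only [F, dif_neg hv, dif_neg hw, Option.some.injEq]
      exact ConnectedComponent.sound (Adj.reachable (show G.Adj v w from hvw))
  let ι := ConnectedComponent.map (G.induceHomOfLE (Set.subset_insert a s)).toHom
  have e : (G.induce (insert a s)).ConnectedComponent ≃ Option (G.induce s).ConnectedComponent :=
    { toFun := ConnectedComponent.lift F fun v w p _ => p.reachable.eq_of_forall_adj hF
      invFun := fun o => o.elim (connectedComponentMk _ ⟨a, Set.mem_insert a s⟩) ι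
      left_inv := fun C => C.ind fun v => by
        by_cases hv : (v : V) = a
        · simp only [ConnectedComponent.lift_mk, F, dif_pos hv, Option.elim]
          exact congrArg _ (Subtype.ext hv.symm)
        · simp only [ConnectedComponent.lift_mk, F, dif_neg hv, Option.elim]
          rfl
      right_inv := fun o => by
        rcases o with _ | C
        · simp [F]
        · induction C using ConnectedComponent.ind with
          | h v =>
            simp only [Option.elim, ι, ConnectedComponent.map_mk, ConnectedComponent.lift_mk, F]
            exact dif_neg fun h : (v : V) = a => ha (h ▸ v.2) }
  have : Finite s := hs.to_subtype
  rw [Nat.card_congr e, Finite.card_option]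

theorem card_connectedComponent_induce_insert_of_existsUnique_adj {b : V} (ha : a ∉ s)
    (hb : b ∈ s) (hab : G.Adj a b) (huniq : ∀ b' ∈ s, G.Adj a b' → b' = b) :
    Nat.card (G.induce (insert a s)).ConnectedComponent =
      Nat.card (G.induce s).ConnectedComponent := by
  classical
  have hmem (v : ↥(insert a s)) (hv : (v : V) ≠ a) : (v : V) ∈ s :=
    Set.mem_of_mem_insert_of_ne v.2 hv
  let F : ↥(insert a s) → (G.induce s).ConnectedComponent := fun v =>
    connectedComponentMk _ (if h : (v : V) = a then ⟨b, hb⟩ else ⟨v, hmem v h⟩)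
  have hF : ∀ v w, (G.induce (insert a s)).Adj v w → F v = F w := by
    rintro v w (hvw : G.Adj v w)
    by_cases hv : (v : V) = a <;> by_cases hw : (w : V) = a
    · exact absurd (hv.trans hw.symm) hvw.ne
    · rw [hv] at hvw
      simp only [F, dif_pos hv, dif_neg hw]
      exact congrArg _ (Subtype.ext (huniq _ (hmem w hw) hvw).symm)
    · rw [hw] at hvw
      simp only [F, dif_neg hv, dif_pos hw]
      exact congrArg _ (Subtype.ext (huniq _ (hmem v hv) hvw.symm))
    · simp only [F, dif_neg hv, dif_neg hw]
      exact ConnectedComponent.sound (Adj.reachable (show G.Adj v w from hvw))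
  let ι := ConnectedComponent.map (G.induceHomOfLE (Set.subset_insert a s)).toHom
  refine Nat.card_congr
    { toFun := ConnectedComponent.lift F fun v w p _ => p.reachable.eq_of_forall_adj hF
      invFun := ι
      left_inv := fun C => C.ind fun v => ?_
      right_inv := fun C => C.ind fun v => ?_ }
  · by_cases hv : (v : V) = a
    · simp only [ConnectedComponent.lift_mk, F, dif_pos hv, ι, ConnectedComponent.map_mk]
      refine ConnectedComponent.sound (Adj.reachable ?_)
      show G.Adj b v
      rw [hv]
      exact hab.symm
    · simp only [ConnectedComponent.lift_mk, F, dif_neg hv]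
      rfl
  · simp only [ι, ConnectedComponent.map_mk, ConnectedComponent.lift_mk, F]
    exact congrArg _ (dif_neg fun h : (v : V) = a => ha (h ▸ v.2))

end SimpleGraph

section CyclicList

open List

theorem length_edgeList (l : List ℕ) : (edgeList l).length = l.length := by
  simp [edgeList]

theorem getElem_edgeList (l : List ℕ) {j : ℕ} (hj : j < l.length) :
    (edgeList l)[j]'(by rwa [length_edgeList]) =
      {l[j], l[(j + 1) % l.length]'(Nat.mod_lt _ (by omega))} := by
  simp only [edgeList, getElem_zipWith, getElem_rotate]

theorem mem_edgeList {l : List ℕ} {g : Finset ℕ} :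
    g ∈ edgeList l ↔ ∃ (j : ℕ) (hj : j < l.length),
      g = {l[j], l[(j + 1) % l.length]'(Nat.mod_lt _ (by omega))} := by
  simp only [mem_iff_getElem, length_edgeList]
  exact exists_congr fun j => exists_congr fun hj => by rw [getElem_edgeList l hj, eq_comm]

theorem mem_of_mem_edgeList {l : List ℕ} {g : Finset ℕ} (hg : g ∈ edgeList l) {x : ℕ}
    (hx : x ∈ g) : x ∈ l := by
  obtain ⟨j, hj, rfl⟩ := mem_edgeList.1 hg
  rcases Finset.mem_insert.1 hx with rfl | hx
  · exact getElem_mem _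
  · rw [Finset.mem_singleton.1 hx]; exact getElem_mem _

theorem nodup_edgeList {l : List ℕ} (hl : l.Nodup) (h3 : 3 ≤ l.length) : (edgeList l).Nodup := by
  rw [nodup_iff_injective_get]
  rintro ⟨j, hj⟩ ⟨k, hk⟩ h
  simp only [get_eq_getElem] at h
  rw [length_edgeList] at hj hk
  rw [getElem_edgeList l hj, getElem_edgeList l hk, Finset.pair_eq_pair_iff, hl.getElem_inj_iff,
    hl.getElem_inj_iff, hl.getElem_inj_iff, hl.getElem_inj_iff] at h
  rcases h with ⟨h, -⟩ | ⟨h1, h2⟩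
  · exact Fin.ext h
  · rcases Nat.add_mod_eq_or hj (d := 1) (by omega) with h | h <;>
      rcases Nat.add_mod_eq_or hk (d := 1) (by omega) with h' | h' <;> omega

theorem card_of_mem_edgeList {l : List ℕ} (hl : l.Nodup) (h2 : 2 ≤ l.length) {g : Finset ℕ}
    (hg : g ∈ edgeList l) : g.card = 2 := by
  obtain ⟨j, hj, rfl⟩ := mem_edgeList.1 hg
  refine Finset.card_pair fun h => ?_
  rw [hl.getElem_inj_iff] at h
  rcases Nat.add_mod_eq_or hj (d := 1) (by omega) with h' | h' <;> omega

theorem edgeList_rotate (l : List ℕ) (r : ℕ) : edgeList (l.rotate r) = (edgeList l).rotate r := by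
  rw [edgeList, edgeList, zipWith_rotate_distrib _ _ _ _ (length_rotate l 1).symm,
    rotate_rotate, rotate_rotate, Nat.add_comm]

theorem edgeList_cons (x : ℕ) (t : List ℕ) :
    edgeList (x :: t) =
      zipWith (fun x y => ({x, y} : Finset ℕ)) (x :: t).dropLast t ++
        [{(x :: t).getLast (cons_ne_nil x t), x}] := by
  rw [edgeList, rotate_cons_succ, rotate_zero]
  conv_lhs => rw [← dropLast_append_getLast (cons_ne_nil x t)]
  rw [zipWith_append (by simp)]
  rfl

theorem toFinset_edgeList_cons_cons {m y : ℕ} {t : List ℕ} (hnd : (edgeList (y :: t)).Nodup) :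
    (edgeList (m :: y :: t)).toFinset =
      insert {m, y} (insert {(y :: t).getLast (cons_ne_nil y t), m}
        ((edgeList (y :: t)).toFinset.erase {(y :: t).getLast (cons_ne_nil y t), y})) := by
  rw [edgeList_cons y t] at hnd ⊢
  rw [edgeList_cons m (y :: t)]
  have hnew := disjoint_singleton.1 (nodup_append'.1 hnd).2.2
  ext g
  simp only [dropLast_cons_cons, zipWith_cons_cons, getLast_cons (cons_ne_nil y t), cons_append,
    mem_toFinset, mem_cons, mem_append, Finset.mem_insert, Finset.mem_erase, not_mem_nil]
  constructor
  · rintro (h | h | h | h)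
    · exact Or.inl h
    · exact Or.inr (Or.inr ⟨by rintro rfl; exact hnew h, Or.inl h⟩)
    · exact Or.inr (Or.inl h)
    · exact h.elim
  · tauto

theorem toFinset_edgeList_insertIdx {l : List ℕ} (hnd : (edgeList l).Nodup) {i : ℕ}
    (hi : i < l.length) (m : ℕ) :
    (edgeList (l.insertIdx (i + 1) m)).toFinset =
      insert {m, l[(i + 1) % l.length]'(Nat.mod_lt _ (by omega))}
        (insert {l[i], m} ((edgeList l).toFinset.erase
          {l[i], l[(i + 1) % l.length]'(Nat.mod_lt _ (by omega))})) := by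
  obtain ⟨y, t, hyt⟩ : ∃ y t, l.rotate (i + 1) = y :: t :=
    ne_nil_iff_exists_cons.1 (by simp [ne_nil_of_length_pos (by omega : 0 < l.length)])
  have hy : y = l[(i + 1) % l.length]'(Nat.mod_lt _ (by omega)) := by
    have := getElem_rotate l (i + 1) 0 (by simp; omega)
    simp_all
  have hz : (y :: t).getLast (cons_ne_nil y t) = l[i] := by
    have hlen : (y :: t).length = l.length := by rw [← hyt, length_rotate]
    rw [getLast_eq_getElem, getElem_of_eq hyt.symm, getElem_rotate]
    congr 1
    rw [hlen, show l.length - 1 + (i + 1) = i + l.length by omega, Nat.add_mod_right,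
      Nat.mod_eq_of_lt hi]
  have hrot : ∀ l' : List ℕ, (edgeList (l'.rotate (i + 1))).toFinset = (edgeList l').toFinset :=
    fun l' => by rw [edgeList_rotate]; exact toFinset_eq_of_perm _ _ (rotate_perm _ _)
  -- rotating by `i + 1` moves the inserted node to the front
  rw [← hrot, insertIdx_rotate l m (by omega), hyt, ← hrot l, hyt,
    toFinset_edgeList_cons_cons (by rw [← hyt, edgeList_rotate]; exact nodup_rotate.2 hnd), hz, hy]

theorem cyclicPrev_insertIdx {l : List ℕ} {m i : ℕ} (hm : m ∉ l) (hi : i < l.length) :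
    cyclicPrev (l.insertIdx (i + 1) m) m = l[i] := by
  have hlen : (l.insertIdx (i + 1) m).length = l.length + 1 :=
    length_insertIdx_of_le_length (by omega) _
  have e : (i + 1 + (l.length + 1 - 1)) % (l.length + 1) = i := by
    rw [show i + 1 + (l.length + 1 - 1) = i + (l.length + 1) by omega, Nat.add_mod_right,
      Nat.mod_eq_of_lt (by omega)]
  rw [cyclicPrev, idxOf_insertIdx_self hm (by omega), hlen,
    getD_eq_getElem _ _ (by simp [hlen]; omega), getElem_rotate, getElem_insertIdx]
  simp only [hlen, e]
  simp

theorem cyclicNext_insertIdx {l : List ℕ} {m i : ℕ} (hm : m ∉ l) (hi : i < l.length) :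
    cyclicNext (l.insertIdx (i + 1) m) m = l[(i + 1) % l.length]'(Nat.mod_lt _ (by omega)) := by
  have hlen : (l.insertIdx (i + 1) m).length = l.length + 1 :=
    length_insertIdx_of_le_length (by omega) _
  rw [cyclicNext, idxOf_insertIdx_self hm (by omega),
    getD_eq_getElem _ _ (by simp [hlen]; omega), getElem_rotate, getElem_insertIdx]
  simp only [hlen]
  rcases Nat.lt_or_ge (i + 1) l.length with h | h
  · have e : (i + 1 + 1) % (l.length + 1) = i + 2 := Nat.mod_eq_of_lt (by omega)
    simp only [e, Nat.mod_eq_of_lt h]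
    simp
  · have e : (i + 1 + 1) % (l.length + 1) = 0 := by
      rw [show i + 1 + 1 = l.length + 1 by omega, Nat.mod_self]
    simp only [e, show (i + 1) % l.length = 0 by rw [show i + 1 = l.length by omega, Nat.mod_self]]
    simp

theorem eq_add_one_mod_or_of_getElem_edgeList_inter {l : List ℕ} (hl : l.Nodup) {t j : ℕ}
    (ht : t < l.length) (hj : j < l.length) (hjt : j ≠ t)
    (hmeet : ((edgeList l)[j]'(by rwa [length_edgeList]) ∩
      (edgeList l)[t]'(by rwa [length_edgeList]) : Finset ℕ) ≠ ∅) :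
    j = (t + 1) % l.length ∨ j = (t + (l.length - 1)) % l.length := by
  obtain ⟨z, hz⟩ := Finset.nonempty_iff_ne_empty.2 hmeet
  simp only [getElem_edgeList l hj, getElem_edgeList l ht, Finset.mem_inter, Finset.mem_insert,
    Finset.mem_singleton] at hz
  obtain ⟨rfl | rfl, h | h⟩ := hz <;> rw [hl.getElem_inj_iff] at h
  · exact absurd h hjt
  · exact Or.inl h
  · right
    rcases Nat.add_mod_eq_or hj (d := 1) (by omega) with h' | h' <;>
      rcases Nat.add_mod_eq_or ht (d := l.length - 1) (by omega) with h'' | h'' <;> omega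
  · rcases Nat.add_mod_eq_or hj (d := 1) (by omega) with h' | h' <;>
      rcases Nat.add_mod_eq_or ht (d := 1) (by omega) with h'' | h'' <;> omega

theorem card_filter_edgeList_adjacent_le_two {l : List ℕ} (hl : l.Nodup) {f : Finset ℕ}
    (hf : f ∈ edgeList l) :
    ((edgeList l).toFinset.filter (fun e => e ≠ f ∧ e ∩ f ≠ ∅)).card ≤ 2 := by
  obtain ⟨t, ht, rfl⟩ := getElem_of_mem hf
  rw [length_edgeList] at ht
  let g : ℕ → Finset ℕ := fun j => (edgeList l).getD j ∅
  calc _ ≤ (({(t + 1) % l.length, (t + (l.length - 1)) % l.length} : Finset ℕ).image g).card := by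
        refine Finset.card_le_card fun e he => ?_
        simp only [Finset.mem_filter, mem_toFinset] at he
        obtain ⟨j, hj, rfl⟩ := getElem_of_mem he.1
        rw [length_edgeList] at hj
        refine Finset.mem_image.2 ⟨j, ?_, getD_eq_getElem _ _ _⟩
        have hjt : j ≠ t := by rintro rfl; exact he.2.1 rfl
        rcases eq_add_one_mod_or_of_getElem_edgeList_inter hl ht hj hjt he.2.2 with h | h <;>
          simp [h]
    _ ≤ 2 := Finset.card_image_le.trans Finset.card_le_two

end CyclicList

section Cycle

variable (c : InfCycle) (k : ℕ)

theorem listOf_add_four :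
    listOf c (k + 4) = (listOf c (k + 3)).insertIdx ((c k).val + 1) (k + 4) := rfl

theorem length_listOf : ∀ k, (listOf c (k + 3)).length = k + 3
  | 0 => rfl
  | k + 1 => by
    rw [listOf_add_four, List.length_insertIdx_of_le_length (by rw [length_listOf k]; omega),
      length_listOf k]

theorem mem_listOf : ∀ k, ∀ x, x ∈ listOf c (k + 3) ↔ 1 ≤ x ∧ x ≤ k + 3
  | 0, x => by simp [listOf]; omega
  | k + 1, x => by
    rw [listOf_add_four, List.mem_insertIdx (by rw [length_listOf]; omega), mem_listOf k x]
    omega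

theorem nodup_listOf : ∀ k, (listOf c (k + 3)).Nodup
  | 0 => by simp [listOf]
  | k + 1 => by
    rw [listOf_add_four, (List.perm_insertIdx _ _ (by rw [length_listOf]; omega)).nodup_iff,
      List.nodup_cons, mem_listOf]
    exact ⟨by omega, nodup_listOf k⟩

theorem nodup_edgeList_listOf : (edgeList (listOf c (k + 3))).Nodup :=
  nodup_edgeList (nodup_listOf c k) (by rw [length_listOf]; omega)

theorem val_lt_length_listOf : (c k).val < (listOf c (k + 3)).length := by
  rw [length_listOf]; exact (c k).isLt

theorem nuMinus_add_four :
    nuMinus c (k + 4) = (listOf c (k + 3))[(c k).val]'(val_lt_length_listOf c k) := by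
  rw [nuMinus, if_neg (by omega), if_neg (by omega), listOf_add_four]
  exact cyclicPrev_insertIdx (by rw [mem_listOf]; omega) _

theorem nuPlus_add_four :
    nuPlus c (k + 4) = (listOf c (k + 3))[((c k).val + 1) % (listOf c (k + 3)).length]'
      (Nat.mod_lt _ (by rw [length_listOf]; omega)) := by
  rw [nuPlus, if_neg (by omega), if_neg (by omega), listOf_add_four]
  exact cyclicNext_insertIdx (by rw [mem_listOf]; omega) (val_lt_length_listOf c k)

/-- The edge of `A_{k+3}` into which node `k + 4` is inserted if `c_{k+3} = v + 1`. -/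
def insertionEdge (v : Fin (k + 3)) : Finset ℕ :=
  (edgeList (listOf c (k + 3)))[v.val]'(by rw [length_edgeList, length_listOf]; exact v.isLt)

theorem nuSet_add_four : nuSet c (k + 4) = insertionEdge c k (c k) := by
  rw [insertionEdge, getElem_edgeList, nuSet, nuMinus_add_four, nuPlus_add_four, Finset.pair_comm]

theorem insertionEdge_injective : Function.Injective (insertionEdge c k) := fun _ _ h =>
  Fin.ext ((nodup_edgeList_listOf c k).getElem_inj_iff.1 h)

theorem image_insertionEdge_univ :
    Finset.univ.image (insertionEdge c k) = cycleEdges c (k + 3) := by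
  ext g
  simp only [Finset.mem_image, Finset.mem_univ, true_and, cycleEdges, List.mem_toFinset,
    List.mem_iff_getElem, length_edgeList, length_listOf, insertionEdge]
  exact ⟨fun ⟨v, hv⟩ => ⟨v, v.isLt, hv⟩, fun ⟨j, hj, hg⟩ => ⟨⟨j, hj⟩, hg⟩⟩

theorem card_filter_insertionEdge (P : Finset ℕ → Prop) [DecidablePred P] :
    (Finset.univ.filter fun v => P (insertionEdge c k v)).card =
      ((cycleEdges c (k + 3)).filter P).card := by
  rw [← image_insertionEdge_univ, Finset.filter_image,
    Finset.card_image_of_injective _ (insertionEdge_injective c k)]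

theorem nuSet_mem_cycleEdges : nuSet c (k + 4) ∈ cycleEdges c (k + 3) := by
  rw [nuSet_add_four, insertionEdge, cycleEdges, List.mem_toFinset]
  exact List.getElem_mem _

theorem cycleEdges_add_four :
    cycleEdges c (k + 4) = insert {k + 4, nuPlus c (k + 4)}
      (insert {nuMinus c (k + 4), k + 4} ((cycleEdges c (k + 3)).erase (nuSet c (k + 4)))) := by
  rw [cycleEdges, cycleEdges, nuSet_add_four, insertionEdge, getElem_edgeList, nuPlus_add_four,
    nuMinus_add_four, listOf_add_four]
  exact toFinset_edgeList_insertIdx (nodup_edgeList_listOf c k) (val_lt_length_listOf c k) _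

end Cycle

section EdgeHistory

variable (c : InfCycle)

theorem card_of_mem_cycleEdges {k : ℕ} {g : Finset ℕ} (hg : g ∈ cycleEdges c (k + 3)) :
    g.card = 2 :=
  card_of_mem_edgeList (nodup_listOf c k) (by rw [length_listOf]; omega) (List.mem_toFinset.1 hg)

theorem card_nuSet (k : ℕ) : (nuSet c (k + 4)).card = 2 :=
  card_of_mem_cycleEdges c (nuSet_mem_cycleEdges c k)

theorem mem_of_mem_cycleEdges {k : ℕ} {g : Finset ℕ} (hg : g ∈ cycleEdges c (k + 3)) {x : ℕ}
    (hx : x ∈ g) : 1 ≤ x ∧ x ≤ k + 3 :=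
  (mem_listOf c k x).1 (mem_of_mem_edgeList (List.mem_toFinset.1 hg) hx)

theorem mem_of_mem_nuSet {j x : ℕ} (hj : 4 ≤ j) (hx : x ∈ nuSet c j) : 1 ≤ x ∧ x < j := by
  obtain ⟨k, rfl⟩ : ∃ k, j = k + 4 := ⟨j - 4, by omega⟩
  have := mem_of_mem_cycleEdges c (nuSet_mem_cycleEdges c k) hx
  omega

theorem mem_cycleEdges_iff_of_le {m n : ℕ} (h3 : 3 ≤ m) (hmn : m ≤ n) {g : Finset ℕ}
    (hg : ∀ x ∈ g, x ≤ m) :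
    g ∈ cycleEdges c n ↔ g ∈ cycleEdges c m ∧ ∀ j, m < j → j ≤ n → nuSet c j ≠ g := by
  induction n, hmn using Nat.le_induction with
  | base => simp only [iff_self_and]; intro _ j h h'; omega
  | succ n hmn ih =>
    obtain ⟨k, rfl⟩ : ∃ k, n = k + 3 := ⟨n - 3, by omega⟩
    have hnew : k + 4 ∉ g := fun h => by have := hg _ h; omega
    rw [cycleEdges_add_four, Finset.mem_insert, Finset.mem_insert, Finset.mem_erase, ih]
    constructor
    · rintro (rfl | rfl | ⟨hne, hm, hj⟩)
      · simp at hnew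
      · simp at hnew
      · refine ⟨hm, fun j hj1 hj2 => ?_⟩
        rcases Nat.lt_or_ge j (k + 4) with h | h
        · exact hj j hj1 (by omega)
        · rw [show j = k + 4 by omega]; exact Ne.symm hne
    · rintro ⟨hm, hj⟩
      exact Or.inr (Or.inr ⟨Ne.symm (hj _ (by omega) le_rfl), hm,
        fun j hj1 hj2 => hj j hj1 (by omega)⟩)

theorem nuSet_ne_of_mem_cycleEdges {n j : ℕ} {g : Finset ℕ} (hg : g ∈ cycleEdges c n)
    (hj : 4 ≤ j) (hjn : j ≤ n) : nuSet c j ≠ g := by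
  rintro rfl
  have := (mem_cycleEdges_iff_of_le c (m := j - 1) (by omega) (by omega)
    (fun x hx => by have := mem_of_mem_nuSet c hj hx; omega)).1 hg
  exact this.2 j (by omega) hjn rfl

theorem eq_of_nuSet_eq {i j : ℕ} (hi : 4 ≤ i) (hj : 4 ≤ j) (h : nuSet c i = nuSet c j) : i = j := by
  wlog hij : i < j generalizing i j
  · rcases Nat.lt_or_ge j i with h' | h'
    · exact (this hj hi h.symm h').symm
    · omega
  obtain ⟨k, rfl⟩ : ∃ k, j = k + 4 := ⟨j - 4, by omega⟩
  exact absurd h (nuSet_ne_of_mem_cycleEdges c (nuSet_mem_cycleEdges c k) hi (by omega))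

theorem exists_nuSet_eq_of_mem_of_notMem {m n : ℕ} (h3 : 3 ≤ m) (hmn : m ≤ n) {g : Finset ℕ}
    (hg : ∀ x ∈ g, x ≤ m) (hgm : g ∈ cycleEdges c m) (hgn : g ∉ cycleEdges c n) :
    ∃ j, m < j ∧ j ≤ n ∧ nuSet c j = g := by
  by_contra! h
  exact hgn ((mem_cycleEdges_iff_of_le c h3 hmn hg).2 ⟨hgm, h⟩)

theorem pair_mem_cycleEdges_of_mem_nuSet {x w : ℕ} (hx : 4 ≤ x) (hw : w ∈ nuSet c x) :
    ({w, x} : Finset ℕ) ∈ cycleEdges c x := by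
  obtain ⟨k, rfl⟩ : ∃ k, x = k + 4 := ⟨x - 4, by omega⟩
  rw [cycleEdges_add_four, Finset.mem_insert, Finset.mem_insert]
  rcases Finset.mem_insert.1 hw with rfl | hw
  · exact Or.inl (Finset.pair_comm _ _)
  · exact Or.inr (Or.inl (by rw [Finset.mem_singleton.1 hw]))

theorem mem_nuSet_of_pair_mem_cycleEdges {n w x : ℕ} (hwx : w < x) (hx : 4 ≤ x)
    (hmem : ({w, x} : Finset ℕ) ∈ cycleEdges c n) : w ∈ nuSet c x := by
  obtain _ | _ | _ | k := n
  iterate 3 simp [cycleEdges, listOf, edgeList] at hmem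
  have hxn := (mem_of_mem_cycleEdges c hmem (Finset.mem_insert_of_mem (Finset.mem_singleton_self _))).2
  have hbound : ∀ y ∈ ({w, x} : Finset ℕ), y ≤ x := by simp; omega
  have := ((mem_cycleEdges_iff_of_le c (by omega) hxn hbound).1 hmem).1
  obtain ⟨k, rfl⟩ : ∃ k, x = k + 4 := ⟨x - 4, by omega⟩
  rw [cycleEdges_add_four, Finset.mem_insert, Finset.mem_insert, Finset.mem_erase] at this
  rcases this with h | h | ⟨_, h⟩
  · rcases Finset.pair_eq_pair_iff.1 h with ⟨h, -⟩ | ⟨h, -⟩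
    · omega
    · simp [nuSet, h]
  · rcases Finset.pair_eq_pair_iff.1 h with ⟨h, -⟩ | ⟨h, -⟩
    · simp [nuSet, h]
    · omega
  · have := mem_of_mem_cycleEdges c h (by simp : k + 4 ∈ ({w, k + 4} : Finset ℕ)); omega

theorem pair_mem_cycleEdges_three {p q : ℕ} (hp : 1 ≤ p) (hpq : p < q) (hq : q ≤ 3) :
    ({p, q} : Finset ℕ) ∈ cycleEdges c 3 := by
  obtain rfl | rfl : p = 1 ∨ p = 2 := by omega
  all_goals interval_cases q <;> simp [cycleEdges, listOf, edgeList, Finset.pair_comm 3 1]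

theorem nuPlus_ne_nuMinus {m : ℕ} (hm : 4 ≤ m) : nuPlus c m ≠ nuMinus c m := by
  obtain ⟨k, rfl⟩ : ∃ k, m = k + 4 := ⟨m - 4, by omega⟩
  intro h
  have := card_nuSet c k
  simp [nuSet, h] at this

theorem nuSet_eq_pair_min_max (m : ℕ) :
    nuSet c m = {min (nuPlus c m) (nuMinus c m), max (nuPlus c m) (nuMinus c m)} := by
  rcases le_total (nuPlus c m) (nuMinus c m) with h | h
  · rw [min_eq_left h, max_eq_right h, nuSet]
  · rw [min_eq_right h, max_eq_left h, nuSet, Finset.pair_comm]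

/-- This rules out type-2 pedigree edges `d → c` at the larger endpoint of `ν_d(m) ∈ E(A_n)`. -/
theorem nuSet_max_inter_nuSet_ne_empty {d : InfCycle} {m n : ℕ} (hm : 4 ≤ m)
    (hx : 4 ≤ max (nuPlus d m) (nuMinus d m)) (hmem : nuSet d m ∈ cycleEdges c n) :
    nuSet c (max (nuPlus d m) (nuMinus d m)) ∩ nuSet d m ≠ ∅ := by
  have hlt : min (nuPlus d m) (nuMinus d m) < max (nuPlus d m) (nuMinus d m) :=
    min_lt_max.2 (nuPlus_ne_nuMinus d hm)
  rw [nuSet_eq_pair_min_max d m] at hmem ⊢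
  refine Finset.nonempty_iff_ne_empty.1 ⟨_, Finset.mem_inter.2
    ⟨mem_nuSet_of_pair_mem_cycleEdges c hlt hx hmem, Finset.mem_insert_self _ _⟩⟩

end EdgeHistory

section Locality

variable {c c' : InfCycle} {m : ℕ}

theorem listOf_congr : ∀ {m}, (∀ j, j + 4 ≤ m → c j = c' j) → listOf c m = listOf c' m
  | 0, _ | 1, _ | 2, _ | 3, _ => rfl
  | k + 4, h => by
    rw [listOf_add_four, listOf_add_four, listOf_congr fun j hj => h j (by omega), h k le_rfl]

theorem nuSet_congr (h : ∀ j, j + 4 ≤ m → c j = c' j) : nuSet c m = nuSet c' m := by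
  simp only [nuSet, nuPlus, nuMinus, listOf_congr h]

theorem max_nu_congr (h : ∀ j, j + 4 ≤ m → c j = c' j) :
    max (nuPlus c m) (nuMinus c m) = max (nuPlus c' m) (nuMinus c' m) := by
  simp only [nuPlus, nuMinus, listOf_congr h]

theorem cycleEdges_congr (h : ∀ j, j + 4 ≤ m → c j = c' j) : cycleEdges c m = cycleEdges c' m := by
  rw [cycleEdges, cycleEdges, listOf_congr h]

theorem insertionEdge_congr (k : ℕ) (h : ∀ j, j < k → c j = c' j) :
    insertionEdge c k = insertionEdge c' k := by
  have hl : listOf c (k + 3) = listOf c' (k + 3) := listOf_congr fun j hj => h j (by omega)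
  funext v
  simp only [insertionEdge, hl]

end Locality

section PedigreeLocality

variable {a a' b b' : InfCycle} {n : ℕ}

theorem Sval_congr (ha : ∀ j, j + 4 ≤ n → a j = a' j) (hb : ∀ j, j + 4 ≤ n → b j = b' j) :
    Sval a b n = Sval a' b' n := by
  rw [Sval, Sval, cycleEdges_congr ha, cycleEdges_congr hb]

theorem Tnum_congr (ha : ∀ j, j + 4 ≤ n → a j = a' j) (hb : ∀ j, j + 4 ≤ n → b j = b' j) :
    Tnum a b n = Tnum a' b' n := by
  have hν : ∀ m ≤ n, nuSet a m = nuSet a' m ∧ nuSet b m = nuSet b' m ∧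
      max (nuPlus a m) (nuMinus a m) = max (nuPlus a' m) (nuMinus a' m) ∧
      max (nuPlus b m) (nuMinus b m) = max (nuPlus b' m) (nuMinus b' m) := fun m hm =>
    have ha' : ∀ j, j + 4 ≤ m → a j = a' j := fun j hj => ha j (by omega)
    have hb' : ∀ j, j + 4 ≤ m → b j = b' j := fun j hj => hb j (by omega)
    ⟨nuSet_congr ha', nuSet_congr hb', max_nu_congr ha', max_nu_congr hb'⟩
  have hV : ∀ k, isVertex a b n k ↔ isVertex a' b' n k := fun k => by
    unfold isVertex
    constructor <;> rintro ⟨h4, hk, hne⟩ <;> refine ⟨h4, hk, ?_⟩ <;>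
      simpa [(hν k hk).1, (hν k hk).2.1] using hne
  have hE : ∀ k m, k ≤ n → m ≤ n → (edgeCond a b k m ↔ edgeCond a' b' k m) := fun k m hk hm => by
    obtain ⟨h1, h2, h3, h4⟩ := hν m hm
    obtain ⟨h5, h6, -, -⟩ := hν k hk
    rw [edgeCond, edgeCond, h1, h2, h3, h4, h5, h6]
  have hG : pedigreeGraph a b n = pedigreeGraph a' b' n := by
    ext k m
    simp only [pedigreeGraph]
    constructor
    · rintro ⟨hk, hm, h⟩
      refine ⟨(hV k).1 hk, (hV m).1 hm, ?_⟩
      rwa [← hE k m hk.2.1 hm.2.1, ← hE m k hm.2.1 hk.2.1]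
    · rintro ⟨hk, hm, h⟩
      refine ⟨(hV k).2 hk, (hV m).2 hm, ?_⟩
      rwa [hE k m hk.2.1 hm.2.1, hE m k hm.2.1 hk.2.1]
  have hVS : vertexSet a b n = vertexSet a' b' n := Set.ext hV
  rw [Tnum, Tnum, pGraph, pGraph, hG, hVS]

end PedigreeLocality

section PedigreeStep

variable (a b : InfCycle) (k : ℕ)

theorem vertexSet_finite (n : ℕ) : (vertexSet a b n).Finite :=
  (Set.finite_Icc 4 n).subset fun _ h => ⟨h.1, h.2.1⟩

theorem add_four_notMem_vertexSet : k + 4 ∉ vertexSet a b (k + 3) := fun h => by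
  have := h.2.1; omega

theorem vertexSet_add_four_of_eq (h : nuSet a (k + 4) = nuSet b (k + 4)) :
    vertexSet a b (k + 4) = vertexSet a b (k + 3) := by
  ext x
  simp only [vertexSet, isVertex, Set.mem_ofPred_eq]
  constructor
  · rintro ⟨h4, hx, hne⟩
    refine ⟨h4, ?_, hne⟩
    by_contra hx'
    exact hne (by rwa [show x = k + 4 by omega])
  · rintro ⟨h4, hx, hne⟩
    exact ⟨h4, by omega, hne⟩

theorem vertexSet_add_four_of_ne (h : nuSet a (k + 4) ≠ nuSet b (k + 4)) :
    vertexSet a b (k + 4) = insert (k + 4) (vertexSet a b (k + 3)) := by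
  ext x
  simp only [vertexSet, isVertex, Set.mem_ofPred_eq, Set.mem_insert_iff]
  constructor
  · rintro ⟨h4, hx, hne⟩
    rcases Nat.lt_or_ge x (k + 4) with hlt | hge
    · exact Or.inr ⟨h4, by omega, hne⟩
    · exact Or.inl (by omega)
  · rintro (rfl | ⟨h4, hx, hne⟩)
    · exact ⟨by omega, le_rfl, h⟩
    · exact ⟨h4, by omega, hne⟩

theorem Tnum_eq_card_induce_add_four :
    Tnum a b (k + 3) =
      Nat.card ((pedigreeGraph a b (k + 4)).induce (vertexSet a b (k + 3))).ConnectedComponent := by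
  have hV : ∀ {x}, x ∈ vertexSet a b (k + 3) → isVertex a b (k + 4) x := fun ⟨h4, hx, hne⟩ =>
    ⟨h4, by omega, hne⟩
  have hG : (pedigreeGraph a b (k + 3)).induce (vertexSet a b (k + 3)) =
      (pedigreeGraph a b (k + 4)).induce (vertexSet a b (k + 3)) := by
    ext ⟨x, hx⟩ ⟨y, hy⟩
    simp only [SimpleGraph.comap_adj, Function.Embedding.subtype_apply, pedigreeGraph]
    exact ⟨fun ⟨_, _, h⟩ => ⟨hV hx, hV hy, h⟩, fun ⟨_, _, h⟩ => ⟨hx, hy, h⟩⟩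
  rw [Tnum, pGraph, hG]

theorem pedigreeGraph_adj_add_four_iff (hne : nuSet a (k + 4) ≠ nuSet b (k + 4)) {y : ℕ}
    (hy : y ∈ vertexSet a b (k + 3)) :
    (pedigreeGraph a b (k + 4)).Adj (k + 4) y ↔ edgeCond a b y (k + 4) := by
  obtain ⟨h4, hyk, hyne⟩ := hy
  simp only [pedigreeGraph, isVertex]
  constructor
  · rintro ⟨-, -, ⟨h, -⟩ | ⟨-, h⟩⟩
    · omega
    · exact h
  · intro h
    exact ⟨⟨by omega, le_rfl, hne⟩, ⟨h4, by omega, hyne⟩, Or.inr ⟨by omega, h⟩⟩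

theorem Tnum_add_four_of_nuSet_eq (h : nuSet a (k + 4) = nuSet b (k + 4)) :
    Tnum a b (k + 4) = Tnum a b (k + 3) := by
  rw [Tnum_eq_card_induce_add_four a b k, Tnum, pGraph, vertexSet_add_four_of_eq a b k h]

theorem Tnum_add_four_of_forall_not_edgeCond (hne : nuSet a (k + 4) ≠ nuSet b (k + 4))
    (hiso : ∀ y ∈ vertexSet a b (k + 3), ¬ edgeCond a b y (k + 4)) :
    Tnum a b (k + 4) = Tnum a b (k + 3) + 1 := by
  rw [Tnum_eq_card_induce_add_four a b k, Tnum, pGraph, vertexSet_add_four_of_ne a b k hne]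
  exact SimpleGraph.card_connectedComponent_induce_insert_of_forall_not_adj
    (add_four_notMem_vertexSet a b k) (vertexSet_finite a b _)
    fun y hy hadj => hiso y hy ((pedigreeGraph_adj_add_four_iff a b k hne hy).1 hadj)

theorem Tnum_add_four_of_existsUnique_edgeCond (hne : nuSet a (k + 4) ≠ nuSet b (k + 4))
    (h : ∃! y, y ∈ vertexSet a b (k + 3) ∧ edgeCond a b y (k + 4)) :
    Tnum a b (k + 4) = Tnum a b (k + 3) := by
  obtain ⟨y, ⟨hy, hedge⟩, huniq⟩ := h
  rw [Tnum_eq_card_induce_add_four a b k, Tnum, pGraph, vertexSet_add_four_of_ne a b k hne]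
  exact SimpleGraph.card_connectedComponent_induce_insert_of_existsUnique_adj
    (add_four_notMem_vertexSet a b k) hy ((pedigreeGraph_adj_add_four_iff a b k hne hy).2 hedge)
    fun y' hy' hadj => huniq y' ⟨hy', (pedigreeGraph_adj_add_four_iff a b k hne hy').1 hadj⟩

end PedigreeStep

section CommonEdgeStep

variable (a b : InfCycle) (k : ℕ)

theorem cycleEdges_add_four_eq_union (c : InfCycle) :
    cycleEdges c (k + 4) = (cycleEdges c (k + 3)).erase (nuSet c (k + 4)) ∪
      (nuSet c (k + 4)).image fun z => ({z, k + 4} : Finset ℕ) := by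
  ext g
  simp only [cycleEdges_add_four, nuSet, Finset.image_insert, Finset.image_singleton,
    Finset.mem_insert, Finset.mem_union, Finset.mem_singleton, Finset.pair_comm (k + 4)]
  tauto

theorem Sval_add_four :
    Sval a b (k + 4) = ((cycleEdges a (k + 3)).erase (nuSet a (k + 4)) ∩
      (cycleEdges b (k + 3)).erase (nuSet b (k + 4))).card +
      (nuSet a (k + 4) ∩ nuSet b (k + 4)).card := by
  have hold : ∀ c : InfCycle, ∀ g ∈ (cycleEdges c (k + 3)).erase (nuSet c (k + 4)), k + 4 ∉ g :=
    fun c g hg hk => by have := mem_of_mem_cycleEdges c (Finset.mem_of_mem_erase hg) hk; omega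
  have hnew : ∀ c : InfCycle, ∀ g ∈ (nuSet c (k + 4)).image fun z => ({z, k + 4} : Finset ℕ),
      k + 4 ∈ g := fun c g hg => by
    obtain ⟨z, -, rfl⟩ := Finset.mem_image.1 hg
    exact Finset.mem_insert_of_mem (Finset.mem_singleton_self _)
  have hinj : Function.Injective fun z : ℕ => ({z, k + 4} : Finset ℕ) := fun z z' h => by
    rcases Finset.pair_eq_pair_iff.1 h with ⟨h, -⟩ | ⟨h, h'⟩ <;> omega
  have hsplit : (((cycleEdges a (k + 3)).erase (nuSet a (k + 4)) ∪
      (nuSet a (k + 4)).image fun z => ({z, k + 4} : Finset ℕ)) ∩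
      ((cycleEdges b (k + 3)).erase (nuSet b (k + 4)) ∪
      (nuSet b (k + 4)).image fun z => ({z, k + 4} : Finset ℕ))) =
      ((cycleEdges a (k + 3)).erase (nuSet a (k + 4)) ∩
        (cycleEdges b (k + 3)).erase (nuSet b (k + 4))) ∪
      (nuSet a (k + 4) ∩ nuSet b (k + 4)).image fun z => ({z, k + 4} : Finset ℕ) := by
    rw [Finset.image_inter _ _ hinj]
    ext g
    simp only [Finset.mem_inter, Finset.mem_union]
    constructor
    · rintro ⟨ha | ha, hb | hb⟩
      · exact Or.inl ⟨ha, hb⟩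
      · exact absurd (hnew b g hb) (hold a g ha)
      · exact absurd (hnew a g ha) (hold b g hb)
      · exact Or.inr ⟨ha, hb⟩
    · rintro (⟨ha, hb⟩ | ⟨ha, hb⟩)
      · exact ⟨Or.inl ha, Or.inl hb⟩
      · exact ⟨Or.inr ha, Or.inr hb⟩
  rw [Sval, cycleEdges_add_four_eq_union, cycleEdges_add_four_eq_union, hsplit,
    Finset.card_union_of_disjoint, Finset.card_image_of_injective _ hinj]
  refine Finset.disjoint_left.2 fun g hg hg' => hold a g (Finset.mem_inter.1 hg).1 ?_
  obtain ⟨z, hz, rfl⟩ := Finset.mem_image.1 hg'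
  exact hnew a _ (Finset.mem_image_of_mem _ (Finset.mem_inter.1 hz).1)

end CommonEdgeStep

section CMove

variable {a b : InfCycle} {k : ℕ}

theorem edgeCond_add_four_iff (hf : nuSet a (k + 4) ∈ cycleEdges b (k + 3)) {y : ℕ}
    (hy : y ∈ vertexSet a b (k + 3)) :
    edgeCond a b y (k + 4) ↔ nuSet b (k + 4) = nuSet a y ∨
      (y = max (nuPlus b (k + 4)) (nuMinus b (k + 4)) ∧ nuSet a y ∩ nuSet b (k + 4) = ∅) := by
  obtain ⟨h4, hyk, -⟩ := hy
  have htype1 : nuSet a (k + 4) ≠ nuSet b y := (nuSet_ne_of_mem_cycleEdges b hf h4 hyk).symm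
  have htype2 : ¬ (y = max (nuPlus a (k + 4)) (nuMinus a (k + 4)) ∧
      nuSet b y ∩ nuSet a (k + 4) = ∅) := by
    rintro ⟨rfl, h⟩
    exact nuSet_max_inter_nuSet_ne_empty b (by omega) h4 hf h
  unfold edgeCond
  constructor
  · rintro (h | h | h | h)
    exacts [absurd h htype1, Or.inl h, absurd h htype2, Or.inr h]
  · rintro (h | h)
    exacts [Or.inr (Or.inl h), Or.inr (Or.inr (Or.inr h))]

theorem not_edgeCond_add_four_of_mem (hf : nuSet a (k + 4) ∈ cycleEdges b (k + 3))
    (he : nuSet b (k + 4) ∈ cycleEdges a (k + 3)) :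
    ∀ y ∈ vertexSet a b (k + 3), ¬ edgeCond a b y (k + 4) := by
  intro y hy
  rw [edgeCond_add_four_iff hf hy]
  obtain ⟨h4, hyk, -⟩ := hy
  rintro (h | ⟨rfl, h⟩)
  · exact nuSet_ne_of_mem_cycleEdges a he h4 hyk h.symm
  · exact nuSet_max_inter_nuSet_ne_empty a (by omega) h4 he h

theorem edgeCond_add_four_iff_eq_of_nuSet_eq (hf : nuSet a (k + 4) ∈ cycleEdges b (k + 3))
    {j : ℕ} (hj4 : 4 ≤ j) (hjk : j ≤ k + 3) (hje : nuSet a j = nuSet b (k + 4)) (y : ℕ) :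
    y ∈ vertexSet a b (k + 3) ∧ edgeCond a b y (k + 4) ↔ y = j := by
  have heB := nuSet_mem_cycleEdges b k
  constructor
  · rintro ⟨hy, hedge⟩
    rcases (edgeCond_add_four_iff hf hy).1 hedge with h | ⟨rfl, h⟩
    · exact eq_of_nuSet_eq a hy.1 hj4 (h.symm.trans hje.symm)
    · obtain ⟨t, rfl⟩ : ∃ t, j = t + 4 := ⟨j - 4, by omega⟩
      exact absurd h (nuSet_max_inter_nuSet_ne_empty a (by omega) hy.1
        (hje ▸ nuSet_mem_cycleEdges a t))
  · rintro rfl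
    have hjV : y ∈ vertexSet a b (k + 3) :=
      ⟨hj4, hjk, fun h => nuSet_ne_of_mem_cycleEdges b heB hj4 hjk (h ▸ hje)⟩
    exact ⟨hjV, (edgeCond_add_four_iff hf hjV).2 (Or.inl hje.symm)⟩

theorem edgeCond_add_four_iff_eq_max_of_forall_nuSet_ne
    (hf : nuSet a (k + 4) ∈ cycleEdges b (k + 3)) (he : nuSet b (k + 4) ∉ cycleEdges a (k + 3))
    (hj : ∀ j, 4 ≤ j → j ≤ k + 3 → nuSet a j ≠ nuSet b (k + 4)) (y : ℕ) :
    y ∈ vertexSet a b (k + 3) ∧ edgeCond a b y (k + 4) ↔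
      y = max (nuPlus b (k + 4)) (nuMinus b (k + 4)) := by
  have heB := nuSet_mem_cycleEdges b k
  set x := max (nuPlus b (k + 4)) (nuMinus b (k + 4))
  set w := min (nuPlus b (k + 4)) (nuMinus b (k + 4))
  have hwx : w < x := min_lt_max.2 (nuPlus_ne_nuMinus b (by omega))
  have hepair : nuSet b (k + 4) = {w, x} := nuSet_eq_pair_min_max b _
  have hxk : x ≤ k + 3 := (mem_of_mem_cycleEdges b heB (by simp [hepair])).2
  have hw1 : 1 ≤ w := (mem_of_mem_cycleEdges b heB (by simp [hepair])).1
  have hnever : ∀ m, 3 ≤ m → m ≤ k + 3 → x ≤ m → nuSet b (k + 4) ∉ cycleEdges a m :=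
    fun m h3 hmk hxm hm => by
      obtain ⟨j, hj1, hj2, hj3⟩ := exists_nuSet_eq_of_mem_of_notMem a h3 hmk
        (fun z hz => by rw [hepair] at hz; simp at hz; omega) hm he
      exact hj j (by omega) hj2 hj3
  have hx4 : 4 ≤ x := by
    by_contra hx
    exact hnever 3 le_rfl (by omega) (by omega)
      (hepair ▸ pair_mem_cycleEdges_three a hw1 hwx (by omega))
  have hwa : w ∉ nuSet a x := fun h =>
    hnever x (by omega) hxk le_rfl (hepair ▸ pair_mem_cycleEdges_of_mem_nuSet a hx4 h)
  have hwb : w ∈ nuSet b x := mem_nuSet_of_pair_mem_cycleEdges b hwx hx4 (hepair ▸ heB)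
  have hdisj : nuSet a x ∩ nuSet b (k + 4) = ∅ := by
    rw [hepair, Finset.eq_empty_iff_forall_notMem]
    intro z hz
    rw [Finset.mem_inter, Finset.mem_insert, Finset.mem_singleton] at hz
    obtain ⟨hza, rfl | rfl⟩ := hz
    · exact hwa hza
    · exact absurd (mem_of_mem_nuSet a hx4 hza).2 (lt_irrefl _)
  have hxV : x ∈ vertexSet a b (k + 3) := ⟨hx4, hxk, fun h => hwa (h ▸ hwb)⟩
  constructor
  · rintro ⟨hy, hedge⟩
    rcases (edgeCond_add_four_iff hf hy).1 hedge with h | ⟨rfl, -⟩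
    · exact absurd h.symm (hj y hy.1 hy.2.1)
    · rfl
  · rintro rfl
    exact ⟨hxV, (edgeCond_add_four_iff hf hxV).2 (Or.inr ⟨rfl, hdisj⟩)⟩

theorem existsUnique_edgeCond_add_four_of_notMem (hf : nuSet a (k + 4) ∈ cycleEdges b (k + 3))
    (he : nuSet b (k + 4) ∉ cycleEdges a (k + 3)) :
    ∃! y, y ∈ vertexSet a b (k + 3) ∧ edgeCond a b y (k + 4) := by
  by_cases hj : ∃ j, 4 ≤ j ∧ j ≤ k + 3 ∧ nuSet a j = nuSet b (k + 4)
  · obtain ⟨j, hj4, hjk, hje⟩ := hj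
    exact ⟨j, (edgeCond_add_four_iff_eq_of_nuSet_eq hf hj4 hjk hje j).2 rfl,
      fun y hy => (edgeCond_add_four_iff_eq_of_nuSet_eq hf hj4 hjk hje y).1 hy⟩
  · push Not at hj
    exact ⟨_, (edgeCond_add_four_iff_eq_max_of_forall_nuSet_ne hf he hj _).2 rfl,
      fun y hy => (edgeCond_add_four_iff_eq_max_of_forall_nuSet_ne hf he hj y).1 hy⟩

end CMove

section CMoveStep

variable {a b : InfCycle} {k : ℕ}

theorem Sval_add_four_of_cMove (hf : nuSet a (k + 4) ∈ cycleEdges b (k + 3)) :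
    Sval a b (k + 4) + 1 + (if nuSet b (k + 4) ≠ nuSet a (k + 4) ∧
      nuSet b (k + 4) ∈ cycleEdges a (k + 3) then 1 else 0) =
      Sval a b (k + 3) + (nuSet a (k + 4) ∩ nuSet b (k + 4)).card := by
  have := Finset.card_erase_inter_erase_add_one (Finset.mem_inter.2 ⟨nuSet_mem_cycleEdges a k, hf⟩)
    (nuSet_mem_cycleEdges b k)
  rw [Sval_add_four, Sval]
  omega

theorem Tnum_add_four_of_cMove (hf : nuSet a (k + 4) ∈ cycleEdges b (k + 3)) :
    Tnum a b (k + 4) = Tnum a b (k + 3) + (if nuSet b (k + 4) ≠ nuSet a (k + 4) ∧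
      nuSet b (k + 4) ∈ cycleEdges a (k + 3) then 1 else 0) := by
  split_ifs with h
  · exact Tnum_add_four_of_forall_not_edgeCond a b k (Ne.symm h.1)
      (not_edgeCond_add_four_of_mem hf h.2)
  · rw [Nat.add_zero]
    by_cases hef : nuSet b (k + 4) = nuSet a (k + 4)
    · exact Tnum_add_four_of_nuSet_eq a b k hef.symm
    · have he : nuSet b (k + 4) ∉ cycleEdges a (k + 3) := fun he => h ⟨hef, he⟩
      exact Tnum_add_four_of_existsUnique_edgeCond a b k (Ne.symm hef)
        (existsUnique_edgeCond_add_four_of_notMem hf he)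

end CMoveStep

/-- The increment `(ΔS, ΔT)` caused by Bob's edge `e` after Alice played a c-move into the edge `f`
of her cycle with edge set `E`. -/
def cMoveIncrement (f e : Finset ℕ) (E : Finset (Finset ℕ)) : ℤ × ℤ :=
  if e = f then (1, 0)
  else if e ∈ E then (if e ∩ f = ∅ then (-2, 1) else (-1, 1))
  else (if e ∩ f = ∅ then (-1, 0) else (0, 0))

theorem increment_eq_cMoveIncrement {a b : InfCycle} {k : ℕ}
    (hf : nuSet a (k + 4) ∈ cycleEdges b (k + 3)) :
    ((Sval a b (k + 4) : ℤ) - Sval a b (k + 3), (Tnum a b (k + 4) : ℤ) - Tnum a b (k + 3)) =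
      cMoveIncrement (nuSet a (k + 4)) (nuSet b (k + 4)) (cycleEdges a (k + 3)) := by
  have hS := Sval_add_four_of_cMove hf
  have hT := Tnum_add_four_of_cMove hf
  have hcard (hne : nuSet b (k + 4) ≠ nuSet a (k + 4)) : (nuSet a (k + 4) ∩ nuSet b (k + 4)).card =
      if nuSet b (k + 4) ∩ nuSet a (k + 4) = ∅ then 0 else 1 := by
    split_ifs with h
    · rw [Finset.inter_comm, h, Finset.card_empty]
    · exact Finset.card_inter_eq_one_of_card_eq_two (card_nuSet a k) (card_nuSet b k) (Ne.symm hne)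
        (by rwa [Finset.inter_comm])
  unfold cMoveIncrement
  by_cases hef : nuSet b (k + 4) = nuSet a (k + 4)
  · rw [if_pos hef]
    rw [if_neg (fun h => h.1 hef), hef, Finset.inter_self, card_nuSet] at hS
    rw [if_neg (fun h => h.1 hef)] at hT
    simp only [Prod.mk.injEq]
    omega
  · rw [hcard hef] at hS
    simp only [ne_eq, hef, not_false_eq_true, true_and] at hS hT
    rw [if_neg hef]
    split_ifs at hS hT ⊢ <;> simp only [Prod.mk.injEq] <;> omega

section Increment

variable {f e : Finset ℕ} {E : Finset (Finset ℕ)}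

theorem cMoveIncrement_mem :
    cMoveIncrement f e E ∈ ([(-2, 1), (-1, 1), (-1, 0), (0, 0), (1, 0)] : List (ℤ × ℤ)) := by
  unfold cMoveIncrement
  split_ifs <;> simp

theorem cMoveIncrement_eq_neg_two_one_iff (hf : f.Nonempty) :
    cMoveIncrement f e E = (-2, 1) ↔ e ∈ E ∧ e ∩ f = ∅ := by
  unfold cMoveIncrement
  split_ifs <;> simp_all [Finset.nonempty_iff_ne_empty]

theorem cMoveIncrement_eq_neg_one_zero_iff (hf : f ∈ E) :
    cMoveIncrement f e E = (-1, 0) ↔ e ∉ E ∧ e ∩ f = ∅ := by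
  unfold cMoveIncrement
  split_ifs <;> simp_all

theorem cMoveIncrement_eq_one_zero_iff : cMoveIncrement f e E = (1, 0) ↔ e = f := by
  unfold cMoveIncrement
  split_ifs <;> simp_all

theorem ne_and_inter_ne_empty_of_cMoveIncrement_eq {d : ℤ × ℤ} (hd : d = (-1, 1) ∨ d = (0, 0))
    (h : cMoveIncrement f e E = d) : e ≠ f ∧ e ∩ f ≠ ∅ := by
  unfold cMoveIncrement at h
  split_ifs at h <;> rcases hd with rfl | rfl <;> simp_all

end Increment

open ProbabilityTheory

theorem measurableSet_prefixEvent (b₀ : InfCycle) (m : ℕ) : MeasurableSet (prefixEvent b₀ m) := by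
  have h : prefixEvent b₀ m = ⋂ j ∈ Finset.range m, (fun b : InfCycle => b j) ⁻¹' {b₀ j} := by
    ext b
    simp [prefixEvent]
  rw [h]
  exact Finset.measurableSet_biInter _ fun j _ => measurable_pi_apply j (measurableSet_singleton _)

theorem cond_prefixEvent_coord_mem {μ : Measure InfCycle} (hμ : IsCycleMeasure μ) (b₀ : InfCycle)
    (k : ℕ) (F : Finset (Fin (k + 3))) :
    μ[{b | b k ∈ F} | prefixEvent b₀ k] = F.card / ((k + 3 : ℕ) : ENNReal) := by
  obtain ⟨hprob, hpre⟩ := hμ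
  have hslice : ∀ {b v}, b ∈ prefixEvent (Function.update b₀ k v) (k + 1) ↔
      b ∈ prefixEvent b₀ k ∧ b k = v := fun {b v} => by
    simp only [prefixEvent, Set.mem_ofPred_eq]
    constructor
    · intro h
      refine ⟨fun j hj => ?_, by simpa using h k (by omega)⟩
      simpa [Function.update_of_ne (show j ≠ k by omega)] using h j (by omega)
    · rintro ⟨h, rfl⟩ j hj
      rcases Nat.lt_succ_iff_lt_or_eq.1 hj with hj | rfl
      · rw [Function.update_of_ne (by omega)]; exact h j hj
      · rw [Function.update_self]
  have hdecomp : prefixEvent b₀ k ∩ {b | b k ∈ F} =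
      ⋃ v ∈ F, prefixEvent (Function.update b₀ k v) (k + 1) := by
    ext b
    simp only [Set.mem_inter_iff, Set.mem_iUnion, hslice, Set.mem_ofPred_eq, exists_prop]
    exact ⟨fun ⟨hb, hF⟩ => ⟨b k, hF, hb, rfl⟩, fun ⟨v, hv, hb, hbv⟩ => ⟨hb, hbv ▸ hv⟩⟩
  have hdisj : (F : Set (Fin (k + 3))).PairwiseDisjoint
      fun v => prefixEvent (Function.update b₀ k v) (k + 1) := fun _ _ _ _ hvw =>
    Set.disjoint_left.2 fun b hv hw => hvw ((hslice.1 hv).2.symm.trans (hslice.1 hw).2)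
  have hP0 : μ (prefixEvent b₀ k) ≠ 0 := by
    rw [hpre]
    exact Finset.prod_ne_zero_iff.2 fun j _ => ENNReal.inv_ne_zero.2 (ENNReal.natCast_ne_top _)
  have hPtop : μ (prefixEvent b₀ k) ≠ ⊤ := measure_ne_top μ _
  rw [cond_apply (measurableSet_prefixEvent b₀ k), hdecomp,
    measure_biUnion_finset hdisj fun v _ => measurableSet_prefixEvent _ _]
  simp only [hpre _ (k + 1), Finset.prod_range_succ, ← hpre b₀ k, Finset.sum_const, nsmul_eq_mul]
  calc _ = (F.card : ENNReal) * ((k + 3 : ℕ) : ENNReal)⁻¹ *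
        ((μ (prefixEvent b₀ k))⁻¹ * μ (prefixEvent b₀ k)) := by ring
    _ = _ := by rw [ENNReal.inv_mul_cancel hP0 hPtop, mul_one, div_eq_mul_inv]

theorem increment_eq_of_mem_prefixEvent (σ : AliceStrategy) {b₀ b : InfCycle} {k : ℕ}
    (hb : b ∈ prefixEvent b₀ k) (hf : nuSet (σ.play b₀) (k + 4) ∈ cycleEdges b₀ (k + 3)) :
    ((Sval (σ.play b) b (k + 4) : ℤ) - Sval (σ.play b₀) b₀ (k + 3),
      (Tnum (σ.play b) b (k + 4) : ℤ) - Tnum (σ.play b₀) b₀ (k + 3)) =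
      cMoveIncrement (nuSet (σ.play b₀) (k + 4)) (insertionEdge b₀ k (b k))
        (cycleEdges (σ.play b₀) (k + 3)) := by
  have hA : ∀ j, j + 4 ≤ k + 4 → σ.play b j = σ.play b₀ j := fun j hj =>
    σ.adapted b b₀ j fun i hi => hb i (by omega)
  have hB : ∀ j, j + 4 ≤ k + 3 → b j = b₀ j := fun j hj => hb j (by omega)
  rw [Sval_congr hA (fun _ _ => rfl), Tnum_congr hA (fun _ _ => rfl),
    ← Sval_congr (fun _ _ => rfl) hB, ← Tnum_congr (fun _ _ => rfl) hB, ← insertionEdge_congr k hb,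
    ← nuSet_add_four]
  exact increment_eq_cMoveIncrement (cycleEdges_congr hB ▸ hf)

theorem condP_eq_card_div {μ : Measure InfCycle} (hμ : IsCycleMeasure μ)
    (σ : AliceStrategy) (b₀ : InfCycle) (k : ℕ)
    (hf : nuSet (σ.play b₀) (k + 4) ∈ cycleEdges b₀ (k + 3)) (ds dt : ℤ) :
    condP μ σ b₀ (k + 3) ds dt =
      ((cycleEdges b₀ (k + 3)).filter fun e => cMoveIncrement (nuSet (σ.play b₀) (k + 4)) e
        (cycleEdges (σ.play b₀) (k + 3)) = (ds, dt)).card / ((k + 3 : ℕ) : ENNReal) := by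
  classical
  rw [← card_filter_insertionEdge, ← cond_prefixEvent_coord_mem hμ b₀ k, condP, Nat.add_sub_cancel,
    ← cond_inter_self (measurableSet_prefixEvent b₀ k),
    ← cond_inter_self (measurableSet_prefixEvent b₀ k) {b | b k ∈ _}]
  congr 1
  ext b
  simp only [Set.mem_inter_iff, Set.mem_ofPred_eq, Finset.mem_filter, Finset.mem_univ, true_and]
  refine and_congr_right fun hb => ?_
  rw [← increment_eq_of_mem_prefixEvent σ hb hf, Prod.mk.injEq, show k + 3 + 1 = k + 4 from rfl]
  omega

theorem card_filter_cMoveIncrement_le_two {c : InfCycle} {k : ℕ} {f : Finset ℕ}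
    (hf : f ∈ cycleEdges c (k + 3)) (E : Finset (Finset ℕ)) {d : ℤ × ℤ}
    (hd : d = (-1, 1) ∨ d = (0, 0)) :
    ((cycleEdges c (k + 3)).filter fun e => cMoveIncrement f e E = d).card ≤ 2 :=
  (Finset.card_le_card (Finset.monotone_filter_right _
    fun _ _ h => ne_and_inter_ne_empty_of_cMoveIncrement_eq hd h)).trans
    (card_filter_edgeList_adjacent_le_two (nodup_listOf c k) (List.mem_toFinset.1 hf))

/-- Transition probabilities of `(S, T)` when Alice plays a c-move at
time `n+1` (her chosen edge `ν_A(n+1)` is a common edge of `A_n` and `B_n`), conditioned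
on Bob's choices up to time `n`. -/
theorem transition_probabilities_c_move
    (μ : Measure InfCycle) (hμ : IsCycleMeasure μ) (σ : AliceStrategy)
    (n : ℕ) (hn : 3 ≤ n) (b₀ : InfCycle)
    (hc : nuSet (σ.play b₀) (n + 1) ∈ cycleEdges b₀ n) :
    condP μ σ b₀ n (-2) 1 = (Sstar (σ.play b₀) b₀ n : ENNReal) / (n : ENNReal) ∧
    condP μ σ b₀ n (-1) 1 ≤ 2 / (n : ENNReal) ∧
    condP μ σ b₀ n (-1) 0 = (Rval (σ.play b₀) b₀ n : ENNReal) / (n : ENNReal) ∧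
    condP μ σ b₀ n 0 0 ≤ 2 / (n : ENNReal) ∧
    condP μ σ b₀ n 1 0 = 1 / (n : ENNReal) ∧
    ∀ ds dt : ℤ, -2 ≤ ds → ds ≤ 1 → -1 ≤ dt → dt ≤ 1 →
      (ds, dt) ∉ ([(-2, 1), (-1, 1), (-1, 0), (0, 0), (1, 0)] : List (ℤ × ℤ)) →
      condP μ σ b₀ n ds dt = 0 := by
  obtain ⟨k, rfl⟩ : ∃ k, n = k + 3 := ⟨n - 3, by omega⟩
  have hfA := nuSet_mem_cycleEdges (σ.play b₀) k
  have hf : (nuSet (σ.play b₀) (k + 4)).Nonempty :=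
    Finset.card_pos.1 (by rw [card_nuSet]; norm_num)
  simp only [condP_eq_card_div hμ σ b₀ k hc, Sstar, Rval]
  refine ⟨?_, ?_, ?_, ?_, ?_, fun ds dt _ _ _ _ hd => ?_⟩
  · congr 3
    ext e
    simp only [Finset.mem_filter, Finset.mem_inter, cMoveIncrement_eq_neg_two_one_iff hf]
    tauto
  · gcongr
    exact_mod_cast card_filter_cMoveIncrement_le_two hc _ (Or.inl rfl)
  · congr 3
    ext e
    simp only [Finset.mem_filter, Finset.mem_sdiff, cMoveIncrement_eq_neg_one_zero_iff hfA]
    tauto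
  · gcongr
    exact_mod_cast card_filter_cMoveIncrement_le_two hc _ (Or.inr rfl)
  · simp only [cMoveIncrement_eq_one_zero_iff, Finset.filter_eq', if_pos hc, Finset.card_singleton,
      Nat.cast_one]
  · rw [Finset.filter_false_of_mem fun e _ h => hd (by rw [← h]; exact cMoveIncrement_mem),
      Finset.card_empty,
      Nat.cast_zero, ENNReal.zero_div]
end

section
/- Let A be an infinite cycle and let 2 ≤ k ≤ n. Then ν_A^+(k) is the first node smaller than k encountered when walking along the cycle A_n starting from node k in the positive direction, and ν_A^−(k) is the first node smaller than k encountered when walking from k in the negative direction. -/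
open MeasureTheory

/-!
Nodes larger than `k` enter the cycle only after time `k`, each by subdividing an edge, so
deleting them from `A_n` leaves `A_k` (for `k = 2`, the cycle `1, 2`) in the same cyclic order.
Hence `ν⁺_A(k)`, the successor of `k` in `A_k`, is the successor of `k` in the sublist of nodes
`≤ k` of `A_n`: the first node `≤ k` other than `k` itself, i.e. the first node `< k`, met when
walking from `k` along `A_n`.
The negative direction is the positive one of the reversed cycle.
-/

theorem Set.EqOn.iterate_apply {α : Type*} {f g : α → α} {s : Set α} (hfg : Set.EqOn f g s)
    (hf : Set.MapsTo f s s) {x : α} (hx : x ∈ s) (n : ℕ) : f^[n] x = g^[n] x := by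
  induction n with
  | zero => rfl
  | succ n ih =>
    rw [Function.iterate_succ_apply', Function.iterate_succ_apply', ← ih, hfg (hf.iterate n hx)]

namespace List

variable {α : Type*}

theorem filter_insertIdx_of_not {p : α → Bool} {x : α} (hx : p x = false) (l : List α) (i : ℕ) :
    (l.insertIdx i x).filter p = l.filter p := by
  induction l generalizing i with
  | nil => cases i <;> simp [hx]
  | cons a l ih => cases i <;> simp [insertIdx_succ_cons, filter_cons, hx, ih]

theorem IsRotated.filter {l l' : List α} (h : l ~r l') (p : α → Bool) :
    l.filter p ~r l'.filter p := by
  obtain ⟨n, rfl⟩ := h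
  rw [rotate_eq_drop_append_take_mod, filter_append]
  conv_lhs => rw [← take_append_drop (n % l.length) l, filter_append]
  exact isRotated_append

end List

section Cyclic

variable {l l' : List ℕ} {x : ℕ}

theorem cyclicNext_eq_next (hx : x ∈ l) : cyclicNext l x = l.next x hx := by
  rw [List.next_eq_getElem, cyclicNext,
    List.getD_eq_getElem _ _ (by simpa using List.idxOf_lt_length_of_mem hx), List.getElem_rotate]

theorem cyclicPrev_eq_prev (hx : x ∈ l) : cyclicPrev l x = l.prev x hx := by
  rw [List.prev_eq_getElem, cyclicPrev,
    List.getD_eq_getElem _ _ (by simpa using List.idxOf_lt_length_of_mem hx), List.getElem_rotate]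

theorem cyclicNext_mem (hx : x ∈ l) : cyclicNext l x ∈ l :=
  cyclicNext_eq_next hx ▸ List.next_mem _ _ hx

theorem cyclicPrev_mem (hx : x ∈ l) : cyclicPrev l x ∈ l :=
  cyclicPrev_eq_prev hx ▸ List.prev_mem _ _ hx

theorem iterate_cyclicNext_getElem (hl : l.Nodup) {i : ℕ} (hi : i < l.length) (m : ℕ) :
    (cyclicNext l)^[m] l[i] = l[(i + m) % l.length]'(Nat.mod_lt _ (by omega)) := by
  induction m with
  | zero => simp [Nat.mod_eq_of_lt hi]
  | succ m ih =>
    rw [Function.iterate_succ_apply', ih, cyclicNext_eq_next (List.getElem_mem _),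
      List.next_getElem _ hl]
    simp only [Nat.mod_add_mod, Nat.add_assoc]

theorem iterate_cyclicNext_cons {k : ℕ} {t : List ℕ} (hl : (k :: t).Nodup) {i : ℕ}
    (hi : i < t.length + 1) : (cyclicNext (k :: t))^[i] k = (k :: t)[i] := by
  calc (cyclicNext (k :: t))^[i] k = (cyclicNext (k :: t))^[i] (k :: t)[0] := rfl
    _ = (k :: t)[i] := by
      rw [iterate_cyclicNext_getElem hl]
      simp only [Nat.zero_add, List.length_cons, Nat.mod_eq_of_lt hi]

theorem cyclicNext_of_isRotated (h : l ~r l') (hl : l.Nodup) (hx : x ∈ l) :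
    cyclicNext l x = cyclicNext l' x := by
  rw [cyclicNext_eq_next hx, cyclicNext_eq_next (h.mem_iff.1 hx), List.isRotated_next_eq h hl]

theorem iterate_cyclicNext_of_isRotated (h : l ~r l') (hl : l.Nodup) (hx : x ∈ l) (m : ℕ) :
    (cyclicNext l)^[m] x = (cyclicNext l')^[m] x :=
  Set.EqOn.iterate_apply (s := {y | y ∈ l}) (fun _ hy => cyclicNext_of_isRotated h hl hy)
    (fun _ => cyclicNext_mem) hx m

theorem cyclicPrev_eq_cyclicNext_reverse (hl : l.Nodup) (hx : x ∈ l) :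
    cyclicPrev l x = cyclicNext l.reverse x := by
  rw [cyclicPrev_eq_prev hx, cyclicNext_eq_next (List.mem_reverse.2 hx),
    List.next_reverse_eq_prev _ hl]

theorem iterate_cyclicPrev (hl : l.Nodup) (hx : x ∈ l) (m : ℕ) :
    (cyclicPrev l)^[m] x = (cyclicNext l.reverse)^[m] x :=
  Set.EqOn.iterate_apply (s := {y | y ∈ l}) (g := cyclicNext l.reverse)
    (fun _ hy => cyclicPrev_eq_cyclicNext_reverse hl hy)
    (fun _ => cyclicPrev_mem) hx m

end Cyclic

theorem exists_first_hit_cons {k : ℕ} {t : List ℕ} (hl : (k :: t).Nodup) {p : ℕ → Bool}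
    (hpk : p k) (hex : ∃ y ∈ t, p y) :
    ∃ j, 1 ≤ j ∧ (cyclicNext (k :: t))^[j] k = cyclicNext ((k :: t).filter p) k ∧
      (cyclicNext (k :: t))^[j] k ≠ k ∧
      ∀ i, 1 ≤ i → i < j → p ((cyclicNext (k :: t))^[i] k) = false := by
  obtain ⟨w, hw⟩ := Option.isSome_iff_exists.1 (List.find?_isSome.2 hex)
  obtain ⟨rest, hrest⟩ := List.head?_eq_some_iff.1 (List.head?_filter ▸ hw)
  obtain ⟨-, i₀, hi₀, rfl, hmin⟩ := List.find?_eq_some_iff_getElem.1 hw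
  have hfilter : (k :: t).filter p = k :: t[i₀] :: rest := by
    rw [List.filter_cons_of_pos hpk, hrest]
  refine ⟨i₀ + 1, by omega, ?_, ?_, ?_⟩
  · rw [iterate_cyclicNext_cons hl (by omega), hfilter, cyclicNext_eq_next List.mem_cons_self,
      List.next_cons_cons_eq]
    rfl
  · rw [iterate_cyclicNext_cons hl (by omega)]
    exact fun h => (List.nodup_cons.1 hl).1 (h ▸ List.getElem_mem _)
  · rintro (_ | i) hi1 hi
    · omega
    · rw [iterate_cyclicNext_cons hl (by omega)]
      simpa using hmin i (by omega)

theorem exists_first_hit {l : List ℕ} (hl : l.Nodup) {p : ℕ → Bool} {x y : ℕ} (hx : x ∈ l)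
    (hpx : p x) (hy : y ∈ l) (hyx : y ≠ x) (hpy : p y) :
    ∃ j, 1 ≤ j ∧ (cyclicNext l)^[j] x = cyclicNext (l.filter p) x ∧ (cyclicNext l)^[j] x ≠ x ∧
      ∀ i, 1 ≤ i → i < j → p ((cyclicNext l)^[i] x) = false := by
  obtain ⟨s, t, rfl⟩ := List.append_of_mem hx
  have hrot : s ++ x :: t ~r x :: (t ++ s) := by
    simpa using List.isRotated_append (l := s) (l' := x :: t)
  have hy' : y ∈ t ++ s := by
    simp only [List.mem_append, List.mem_cons] at hy ⊢
    tauto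
  simp only [iterate_cyclicNext_of_isRotated hrot hl hx,
    cyclicNext_of_isRotated (hrot.filter p) (hl.filter p) (List.mem_filter.2 ⟨hx, hpx⟩)]
  exact exists_first_hit_cons (hrot.nodup_iff.1 hl) hpx ⟨y, hy', hpy⟩

theorem exists_first_smaller {l : List ℕ} (hl : l.Nodup) {k y : ℕ} (hk : k ∈ l) (hy : y ∈ l)
    (hyk : y < k) :
    ∃ j, 1 ≤ j ∧ (cyclicNext l)^[j] k = cyclicNext (l.filter (· ≤ k)) k ∧
      cyclicNext (l.filter (· ≤ k)) k < k ∧ ∀ i, 1 ≤ i → i < j → k ≤ (cyclicNext l)^[i] k := by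
  obtain ⟨j, hj, hjk, hne, hmin⟩ :=
    exists_first_hit hl hk (p := (· ≤ k)) (decide_eq_true le_rfl) hy hyk.ne
      (decide_eq_true hyk.le)
  have hkF : k ∈ l.filter (· ≤ k) := List.mem_filter.2 ⟨hk, decide_eq_true le_rfl⟩
  have hle : cyclicNext (l.filter (· ≤ k)) k ≤ k :=
    of_decide_eq_true (List.mem_filter.1 (cyclicNext_mem hkF)).2
  exact ⟨j, hj, hjk, lt_of_le_of_ne hle (hjk ▸ hne),
    fun i h1 h2 => (not_le.1 (of_decide_eq_false (hmin i h1 h2))).le⟩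

section ListOf

variable (a : InfCycle) {k n : ℕ}

theorem listOf_succ (hn : 3 ≤ n) :
    listOf a (n + 1) = (listOf a n).insertIdx ((a (n - 3)).val + 1) (n + 1) := by
  obtain ⟨m, rfl⟩ := Nat.exists_eq_add_of_le' hn
  rfl

theorem insertion_index_le (hn : 3 ≤ n) : (a (n - 3)).val + 1 ≤ n := by
  have := (a (n - 3)).isLt
  omega

theorem length_listOf_s14 (hn : 3 ≤ n) : (listOf a n).length = n := by
  induction n, hn using Nat.le_induction with
  | base => rfl
  | succ n hn ih =>
    rw [listOf_succ a hn,
      List.length_insertIdx_of_le_length (by rw [ih]; exact insertion_index_le a hn), ih]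

theorem mem_listOf_s14 (hn : 3 ≤ n) {x : ℕ} : x ∈ listOf a n ↔ 1 ≤ x ∧ x ≤ n := by
  induction n, hn using Nat.le_induction with
  | base => simp only [listOf, List.mem_cons, List.not_mem_nil, or_false]; omega
  | succ n hn ih =>
    rw [listOf_succ a hn,
      List.mem_insertIdx ((length_listOf_s14 a hn).symm ▸ insertion_index_le a hn), ih]
    omega

theorem nodup_listOf_s14 (hn : 3 ≤ n) : (listOf a n).Nodup := by
  induction n, hn using Nat.le_induction with
  | base => show [1, 2, 3].Nodup; decide
  | succ n hn ih =>
    rw [listOf_succ a hn, (List.perm_insertIdx _ _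
        ((length_listOf_s14 a hn).symm ▸ insertion_index_le a hn)).nodup_iff,
      List.nodup_cons, mem_listOf_s14 a hn]
    exact ⟨by omega, ih⟩

theorem filter_listOf_of_le {m : ℕ} (hm : 3 ≤ m) (hmn : m ≤ n) (hkm : k ≤ m) :
    (listOf a n).filter (· ≤ k) = (listOf a m).filter (· ≤ k) := by
  induction n, hmn using Nat.le_induction with
  | base => rfl
  | succ n hmn ih =>
    rw [listOf_succ a (hm.trans hmn), List.filter_insertIdx_of_not (p := (· ≤ k))
      (decide_eq_false (by omega)), ih]

theorem filter_listOf (hk : 3 ≤ k) (hkn : k ≤ n) : (listOf a n).filter (· ≤ k) = listOf a k := by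
  rw [filter_listOf_of_le a hk hkn le_rfl]
  exact List.filter_eq_self.2 fun x hx => decide_eq_true ((mem_listOf_s14 a hk).1 hx).2

theorem nuPlus_eq_cyclicNext_filter (hk : 2 ≤ k) (hkn : k ≤ n) (hn : 3 ≤ n) :
    nuPlus a k = cyclicNext ((listOf a n).filter (· ≤ k)) k := by
  rcases hk.eq_or_lt with rfl | hk
  · rw [filter_listOf_of_le a le_rfl hn (by norm_num)]
    rfl
  · rw [filter_listOf a hk hkn, nuPlus, if_neg (by omega), if_neg (by omega)]

theorem nuMinus_eq_cyclicNext_filter (hk : 2 ≤ k) (hkn : k ≤ n) (hn : 3 ≤ n) :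
    nuMinus a k = cyclicNext ((listOf a n).filter (· ≤ k)).reverse k := by
  rcases hk.eq_or_lt with rfl | hk
  · rw [filter_listOf_of_le a le_rfl hn (by norm_num)]
    rfl
  · have hkk : k ∈ listOf a k := (mem_listOf_s14 a hk).2 ⟨by omega, le_rfl⟩
    rw [filter_listOf a hk hkn, nuMinus, if_neg (by omega), if_neg (by omega),
      cyclicPrev_eq_cyclicNext_reverse (nodup_listOf_s14 a hk) hkk]

end ListOf

/-- For 2 ≤ k ≤ n, `ν⁺_A(k)` is the first node smaller than `k`
encountered when walking along `A_n` from `k` in positive direction, and `ν⁻_A(k)` is the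
first node smaller than `k` encountered when walking in negative direction. -/
theorem nu_via_walk (a : InfCycle) (k n : ℕ) (h2 : 2 ≤ k) (hkn : k ≤ n) (hn : 3 ≤ n) :
    (∃ j : ℕ, 1 ≤ j ∧ (cyclicNext (listOf a n))^[j] k = nuPlus a k ∧ nuPlus a k < k ∧
      ∀ i : ℕ, 1 ≤ i → i < j → k ≤ (cyclicNext (listOf a n))^[i] k) ∧
    (∃ j : ℕ, 1 ≤ j ∧ (cyclicPrev (listOf a n))^[j] k = nuMinus a k ∧ nuMinus a k < k ∧
      ∀ i : ℕ, 1 ≤ i → i < j → k ≤ (cyclicPrev (listOf a n))^[i] k) := by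
  have hl := nodup_listOf_s14 a hn
  have hk : k ∈ listOf a n := (mem_listOf_s14 a hn).2 ⟨by omega, hkn⟩
  have h1 : 1 ∈ listOf a n := (mem_listOf_s14 a hn).2 ⟨le_rfl, by omega⟩
  rw [nuPlus_eq_cyclicNext_filter a h2 hkn hn, nuMinus_eq_cyclicNext_filter a h2 hkn hn,
    ← List.filter_reverse]
  simp only [iterate_cyclicPrev hl hk]
  exact ⟨exists_first_smaller hl hk h1 (by omega),
    exists_first_smaller (List.nodup_reverse.2 hl) (List.mem_reverse.2 hk)
      (List.mem_reverse.2 h1) (by omega)⟩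
end
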